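/- arXiv:1103.1769 — 8 statements merged into one kernel-verified Lean document; each statement's English description precedes it below -/
import Mathlib

section
/- Let f : ℤ^N → ℤ^N be a map given coordinatewise by polynomials with integer coefficients (i.e., there exist f₁,...,f_N ∈ ℤ[X₁,...,X_N] with f(a) = (f₁(a),...,f_N(a))). If for every commutative ring A the induced map A^N → A^N is injective, then f itself (the map on ℤ^N) is surjective, hence bijective. -/
/-!
By Ax–Grothendieck the polynomial map is surjective over `ℚ̄`, so the fibre over `b ∈ ℤ^N` has a
point over `ℚ̄`. Injectivity over `ℚ̄` makes this point unique, so it is fixed by `Gal(ℚ̄/ℚ)` and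
is therefore rational. Over the finite rings `ℤ/p^k` injectivity gives surjectivity as well; the
unique points there are compatible and define a point over `ℤ_p`. Injectivity over `ℚ_p` identifies
it with the rational point, which is therefore `p`-integral for every prime `p`, hence integral.
-/

open Function

namespace MvPolynomial

noncomputable def evalMap {σ ι : Type*} (f : ι → MvPolynomial σ ℤ) (A : Type*) [CommRing A]
    (a : σ → A) : ι → A :=
  fun i => aeval a (f i)

section PointTransport

variable {σ ι A B C : Type*} [CommRing A] [CommRing B] [CommRing C] {f : ι → MvPolynomial σ ℤ}
  {b : ι → ℤ}

lemma evalMap_comp (g : A →+* B) (a : σ → A) : evalMap f B (g ∘ a) = g ∘ evalMap f A a := by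
  ext i
  exact (comp_aeval_apply a g.toIntAlgHom (f i)).symm

lemma evalMap_comp_eq_intCast (g : A →+* B) {a : σ → A} (ha : evalMap f A a = Int.cast ∘ b) :
    evalMap f B (g ∘ a) = Int.cast ∘ b := by
  rw [evalMap_comp, ha]
  ext i
  exact map_intCast g (b i)

lemma comp_eq_comp_of_evalMap_eq_intCast (hC : Injective (evalMap f C)) (g₁ : A →+* C)
    (g₂ : B →+* C) {a₁ : σ → A} {a₂ : σ → B} (h₁ : evalMap f A a₁ = Int.cast ∘ b)
    (h₂ : evalMap f B a₂ = Int.cast ∘ b) : g₁ ∘ a₁ = g₂ ∘ a₂ :=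
  hC <| (evalMap_comp_eq_intCast g₁ h₁).trans (evalMap_comp_eq_intCast g₂ h₂).symm

lemma exists_evalMap_eq_of_isGalois {F K : Type*} [Field F] [Field K] [Algebra F K]
    [IsGalois F K] (hK : Injective (evalMap f K)) {α : σ → K}
    (hα : evalMap f K α = Int.cast ∘ b) : ∃ a : σ → F, evalMap f F a = Int.cast ∘ b := by
  have hfixed : ∀ i, α i ∈ Set.range (algebraMap F K) := fun i =>
    (InfiniteGalois.mem_range_algebraMap_iff_fixed _).2 fun τ =>
      congrFun (comp_eq_comp_of_evalMap_eq_intCast hK (τ : K →+* K) (RingHom.id K) hα hα) i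
  choose a ha using hfixed
  refine ⟨a, (algebraMap F K).injective.comp_left ?_⟩
  dsimp only
  rw [← evalMap_comp, show ⇑(algebraMap F K) ∘ a = α from _root_.funext ha, hα]
  ext i
  exact (map_intCast _ (b i)).symm

end PointTransport

variable {σ : Type*} [Finite σ] {f : σ → MvPolynomial σ ℤ}

lemma evalMap_surjective_of_isAlgClosed {K : Type*} [Field K] [IsAlgClosed K]
    (hK : Injective (evalMap f K)) : Surjective (evalMap f K) := by
  have hmap : evalMap f K = fun v i => eval v ((f i).map (Int.castRingHom K)) := by
    ext v i
    rw [eval_map, evalMap, aeval_def, algebraMap_int_eq]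
  rw [hmap] at hK ⊢
  exact ax_grothendieck_univ _ hK

lemma exists_padicInt_evalMap_eq (p : ℕ) [Fact p.Prime]
    (hinj : ∀ k, Injective (evalMap f (ZMod (p ^ k)))) (b : σ → ℤ) :
    ∃ a : σ → ℤ_[p], evalMap f ℤ_[p] a = Int.cast ∘ b := by
  have hsol : ∀ k, ∃ a : σ → ZMod (p ^ k), evalMap f _ a = Int.cast ∘ b := fun k =>
    have : NeZero (p ^ k) := ⟨pow_ne_zero k (Fact.out : p.Prime).ne_zero⟩
    Finite.injective_iff_surjective.1 (hinj k) _
  choose a ha using hsol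
  let φ : ∀ k, MvPolynomial σ ℤ →+* ZMod (p ^ k) := fun k => (aeval (a k)).toRingHom
  have hcompat : ∀ (k₁ k₂ : ℕ) (hk : k₁ ≤ k₂),
      (ZMod.castHom (pow_dvd_pow p hk) (ZMod (p ^ k₁))).comp (φ k₂) = φ k₁ := by
    intro k₁ k₂ hk
    have hpt := comp_eq_comp_of_evalMap_eq_intCast (hinj k₁)
      (ZMod.castHom (pow_dvd_pow p hk) _) (RingHom.id _) (ha k₂) (ha k₁)
    exact ringHom_ext (fun r => by simp [φ]) fun i => by simpa [φ] using congrFun hpt i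
  let ψ := PadicInt.lift hcompat
  have hψ : ∀ k, PadicInt.toZModPow k ∘ (fun i => ψ (X i)) = a k := fun k =>
    _root_.funext fun i => by
      simpa [φ, ψ] using RingHom.congr_fun (PadicInt.lift_spec hcompat k) (X i)
  refine ⟨fun i => ψ (X i), ?_⟩
  ext i
  refine PadicInt.ext_of_toZModPow.1 fun k => ?_
  have := congrFun (evalMap_comp (f := f) (PadicInt.toZModPow k) fun i => ψ (X i)) i
  rw [hψ, ha] at this
  simpa using this.symm

end MvPolynomial

lemma Rat.exists_intCast_eq_of_forall_norm_padic_le_one (q : ℚ)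
    (h : ∀ (p : ℕ) [Fact p.Prime], ‖(q : ℚ_[p])‖ ≤ 1) : ∃ z : ℤ, (z : ℚ) = q := by
  suffices q.den = 1 from ⟨q.num, Rat.coe_int_num_of_den_eq_one this⟩
  by_contra hden
  set p := q.den.minFac
  have : Fact p.Prime := ⟨Nat.minFac_prime hden⟩
  have hunit := PadicInt.isUnit_den q (h p)
  rw [PadicInt.isUnit_iff] at hunit
  have : ‖(q.den : ℤ_[p])‖ < 1 :=
    (PadicInt.norm_lt_one_iff_dvd _).2 (Nat.cast_dvd_cast (Nat.minFac_dvd _))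
  linarith

-- The `Algebra ℚ (AlgebraicClosure ℚ)` found by instance search is `DivisionRing.toRatAlgebra`,
-- not the instance `AlgebraicClosure` provides its `IsAlgClosure` structure for.
instance : IsGalois ℚ (AlgebraicClosure ℚ) := by
  rw [Subsingleton.elim DivisionRing.toRatAlgebra (AlgebraicClosure.instAlgebra ℚ)]
  infer_instance

open MvPolynomial in
theorem stmt_0_general (N : ℕ) (f : Fin N → MvPolynomial (Fin N) ℤ)
    (hinj : ∀ (A : Type) [CommRing A],
      Function.Injective (fun (a : Fin N → A) => fun i => MvPolynomial.aeval a (f i))) :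
    Function.Bijective (fun (a : Fin N → ℤ) => fun i => MvPolynomial.aeval a (f i)) := by
  refine ⟨hinj ℤ, fun b => ?_⟩
  obtain ⟨α, hα⟩ := evalMap_surjective_of_isAlgClosed (hinj (AlgebraicClosure ℚ)) (Int.cast ∘ b)
  obtain ⟨q, hq⟩ := exists_evalMap_eq_of_isGalois (F := ℚ) (hinj _) hα
  have hpadic : ∀ i (p : ℕ) [Fact p.Prime], ‖(q i : ℚ_[p])‖ ≤ 1 := by
    intro i p _
    obtain ⟨a, ha⟩ := exists_padicInt_evalMap_eq p (fun k => hinj _) b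
    have hqa : (q i : ℚ_[p]) = a i := congrFun (comp_eq_comp_of_evalMap_eq_intCast (hinj ℚ_[p])
      (Rat.castHom _) PadicInt.Coe.ringHom hq ha) i
    exact hqa ▸ (a i).2
  choose z hz using fun i => Rat.exists_intCast_eq_of_forall_norm_padic_le_one (q i) (hpadic i)
  refine ⟨z, ?_⟩
  show evalMap f ℤ z = b
  refine (Int.cast_injective (α := ℚ)).comp_left ?_
  have hzq : Int.castRingHom ℚ ∘ z = q := funext hz
  dsimp only
  rw [← hq, ← hzq, evalMap_comp]
  rfl

/-- If a tuple of integer polynomials induces an injective map `A^N → A^N`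
for every commutative ring `A`, then the induced map on `ℤ^N` is bijective. -/
theorem stmt_0 (N : ℕ) (hN : 0 < N) (f : Fin N → MvPolynomial (Fin N) ℤ)
    (hinj : ∀ (A : Type) [CommRing A],
      Function.Injective (fun (a : Fin N → A) => fun i => MvPolynomial.aeval a (f i))) :
    Function.Bijective (fun (a : Fin N → ℤ) => fun i => MvPolynomial.aeval a (f i)) :=
  stmt_0_general N f hinj
end

section
/- Let f₁,...,f_N ∈ ℤ[X₁,...,X_N] and suppose the induced map f_A : A^N → A^N is injective for every commutative ring A. Then the induced map on (ℤ_p)^N, where ℤ_p is the ring of p-adic integers for a prime p, is bijective. -/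
/-! Injectivity over the finite rings `ℤ/p^n` makes the polynomial map bijective there, so every
point of `ℤ_p^N` is hit modulo every `p^n`: the image of `ℤ_p^N` is dense. Being the continuous
image of a compact space it is also closed, hence everything. -/

theorem Continuous.surjective_of_denseRange {X Y : Type*} [TopologicalSpace X] [CompactSpace X]
    [TopologicalSpace Y] [T2Space Y] {F : X → Y} (hF : Continuous F) (hd : DenseRange F) :
    Function.Surjective F := by
  rw [← Set.range_eq_univ, ← (isCompact_range hF).isClosed.closure_eq]
  exact hd.closure_range

theorem MvPolynomial.continuous_aeval {R A σ : Type*} [CommSemiring R] [CommSemiring A]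
    [Algebra R A] [TopologicalSpace A] [IsTopologicalSemiring A] (q : MvPolynomial σ R) :
    Continuous fun x : σ → A => aeval x q := by
  simpa only [aeval_def, eval₂_eq_eval_map] using continuous_eval (map (algebraMap R A) q)

theorem MvPolynomial.ringHom_aeval_int {σ A B : Type*} [CommRing A] [CommRing B] (φ : A →+* B)
    (x : σ → A) (q : MvPolynomial σ ℤ) : φ (aeval x q) = aeval (φ ∘ x) q :=
  AlgHom.congr_fun (comp_aeval x φ.toIntAlgHom) q

theorem MvPolynomial.exists_aeval_congr_of_surjective {σ ι A B : Type*} [CommRing A] [CommRing B]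
    (φ : A →+* B) (hφ : Function.Surjective φ) (f : ι → MvPolynomial σ ℤ)
    (hB : Function.Surjective fun (z : σ → B) i => aeval z (f i)) (y : ι → A) :
    ∃ x : σ → A, ∀ i, φ (aeval x (f i)) = φ (y i) := by
  obtain ⟨z, hz⟩ := hB (φ ∘ y)
  choose x hx using fun j => hφ (z j)
  refine ⟨x, fun i => ?_⟩
  rw [ringHom_aeval_int, show φ ∘ x = z from _root_.funext hx]
  exact congrFun hz i

namespace PadicInt

variable {p : ℕ} [Fact p.Prime]

theorem dist_le_of_toZModPow_eq {x y : ℤ_[p]} {n : ℕ} (h : toZModPow n x = toZModPow n y) :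
    dist x y ≤ (p : ℝ) ^ (-(n : ℤ)) := by
  rw [dist_eq_norm, norm_le_pow_iff_mem_span_pow, ← ker_toZModPow, RingHom.mem_ker, map_sub, h,
    sub_self]

theorem dense_of_forall_exists_toZModPow_eq {ι : Type*} [Finite ι] {S : Set (ι → ℤ_[p])}
    (h : ∀ n (y : ι → ℤ_[p]), ∃ x ∈ S, ∀ i, toZModPow n (x i) = toZModPow n (y i)) :
    Dense S := by
  have := Fintype.ofFinite ι
  intro y
  rw [Metric.mem_closure_iff]
  intro ε hε
  obtain ⟨n, hn⟩ := exists_pow_neg_lt p hε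
  obtain ⟨x, hxS, hx⟩ := h n y
  exact ⟨x, hxS, (dist_pi_lt_iff hε).2 fun i => (dist_le_of_toZModPow_eq (hx i).symm).trans_lt hn⟩

end PadicInt

theorem stmt_2_general (N : ℕ) (p : ℕ) [Fact p.Prime]
    (f : Fin N → MvPolynomial (Fin N) ℤ)
    (hinj : ∀ (A : Type) [CommRing A],
      Function.Injective (fun (a : Fin N → A) => fun i => MvPolynomial.aeval a (f i))) :
    Function.Bijective (fun (a : Fin N → ℤ_[p]) => fun i => MvPolynomial.aeval a (f i)) := by
  have hcont : Continuous fun (a : Fin N → ℤ_[p]) i => MvPolynomial.aeval a (f i) :=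
    continuous_pi fun i => (f i).continuous_aeval
  refine ⟨hinj ℤ_[p], hcont.surjective_of_denseRange ?_⟩
  refine PadicInt.dense_of_forall_exists_toZModPow_eq fun n y => ?_
  have hbij := Finite.injective_iff_bijective.mp (hinj (ZMod (p ^ n)))
  obtain ⟨x, hx⟩ := MvPolynomial.exists_aeval_congr_of_surjective (PadicInt.toZModPow n)
    (ZMod.ringHom_surjective _) f hbij.2 y
  exact ⟨_, ⟨x, rfl⟩, hx⟩

/-- If a tuple of integer polynomials induces an injective map for every
commutative ring, then the induced map on `(ℤ_p)^N` is bijective, for any prime `p`. -/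
theorem stmt_2 (N : ℕ) (hN : 0 < N) (p : ℕ) [Fact p.Prime]
    (f : Fin N → MvPolynomial (Fin N) ℤ)
    (hinj : ∀ (A : Type) [CommRing A],
      Function.Injective (fun (a : Fin N → A) => fun i => MvPolynomial.aeval a (f i))) :
    Function.Bijective (fun (a : Fin N → ℤ_[p]) => fun i => MvPolynomial.aeval a (f i)) :=
  stmt_2_general N p f hinj
end

section
/- Let k be an algebraically closed field and f : k^N → k^N a map given coordinatewise by polynomials with integer coefficients. If for every commutative ring A the induced polynomial map f_A : A^N → A^N is injective, then for every point a ∈ k^N the Jacobian matrix (∂f_j/∂X_k evaluated at a) is invertible. -/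
/-!
Over the dual numbers `R[ε]`, first-order Taylor expansion is exact:
`f (a + ε v) = f a + ε (J_f(a) v)`. So if `J_f(a) v = J_f(a) w`, the points `a + ε v` and
`a + ε w` have the same image, and injectivity of `f` over `k[ε]` gives `v = w`. A square
matrix over a field acting injectively is invertible.
-/

open MvPolynomial TrivSqZeroExt

theorem MvPolynomial.aeval_inl_add_inr {σ S R : Type*} [Fintype σ] [CommSemiring S]
    [CommSemiring R] [Algebra S R] (a v : σ → R) (p : MvPolynomial σ S) :
    aeval (fun i => inl (a i) + inr (v i) : σ → DualNumber R) p =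
      inl (aeval a p) + inr (∑ l, aeval a (pderiv l p) * v l) := by
  induction p using MvPolynomial.induction_on with
  | C s => simp [algebraMap_eq_inl']
  | add p q hp hq =>
      simp only [map_add, hp, hq, add_mul, Finset.sum_add_distrib, inr_add, inl_add]
      abel
  | mul_X p i hp =>
      have hsum : ∑ l, aeval a (pderiv l (p * X i)) * v l =
          (∑ l, aeval a (pderiv l p) * v l) * a i + aeval a p * v i := by
        simp only [pderiv_mul, map_add, map_mul, aeval_X, add_mul, Finset.sum_add_distrib,
          Finset.sum_mul]
        congr 1
        · exact Finset.sum_congr rfl fun l _ => by ring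
        · rw [Finset.sum_eq_single i (fun l _ hl => by simp [pderiv_X_of_ne hl.symm]) (by simp)]
          simp
      rw [map_mul, hp, aeval_X, hsum]
      ext <;> simp [smul_eq_mul]; ring

theorem stmt_4_general (k : Type) [Field k] (N : ℕ)
    (f : Fin N → MvPolynomial (Fin N) ℤ)
    (hinj : ∀ (A : Type) [CommRing A],
      Function.Injective (fun (a : Fin N → A) => fun i => MvPolynomial.aeval a (f i))) :
    ∀ a : Fin N → k,
      IsUnit (Matrix.of fun j l : Fin N =>
        (MvPolynomial.aeval a (MvPolynomial.pderiv l (f j)) : k)) := by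
  intro a
  rw [← Matrix.mulVec_injective_iff_isUnit]
  intro v w hvw
  -- `hinj` evaluates through the `ℤ`-algebra structure of a ring, which agrees with the one
  -- of `DualNumber k` only up to defeq, so the Taylor expansion is chained with `trans`.
  have hdual := hinj (DualNumber k) (a₁ := fun i => inl (a i) + inr (v i))
    (a₂ := fun i => inl (a i) + inr (w i)) <| funext fun j =>
      (aeval_inl_add_inr a v (f j)).trans <| Eq.trans
        (congrArg (fun x => inl (aeval a (f j)) + inr x) (congrFun hvw j))
        (aeval_inl_add_inr a w (f j)).symm
  funext i
  simpa using congrArg snd (congrFun hdual i)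

/-- If a tuple of integer polynomials induces an injective map for every
commutative ring, then over an algebraically closed field `k` the Jacobian matrix is
invertible at every point of `k^N`. -/
theorem stmt_4 (k : Type) [Field k] [IsAlgClosed k] (N : ℕ)
    (f : Fin N → MvPolynomial (Fin N) ℤ)
    (hinj : ∀ (A : Type) [CommRing A],
      Function.Injective (fun (a : Fin N → A) => fun i => MvPolynomial.aeval a (f i))) :
    ∀ a : Fin N → k,
      IsUnit (Matrix.of fun j l : Fin N =>
        (MvPolynomial.aeval a (MvPolynomial.pderiv l (f j)) : k)) :=
  stmt_4_general k N f hinj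
end

section
/- Let f₁,...,f_N and f'₁,...,f'_N be two N-tuples of polynomials in ℤ[X₁,...,X_N] such that the induced composite f'_A ∘ f_A is the identity on A^N for every commutative ring A. Then for every commutative ring A, f_A ∘ f'_A is also the identity on A^N; in particular each f_A is bijective with inverse f'_A. -/
/-!
Evaluating `f' ∘ f = id` at the generic point `X` of `ℤ[X₁, …, X_N]` shows that the
substitution endomorphism `bind₁ f` has right inverse `bind₁ f'`. A surjective endomorphism
of a Noetherian ring is injective, so `bind₁ f'` is a two-sided inverse, i.e. `f'` substituted
into `f` gives back the variables; specialising along `ℤ[X] → A` yields `f_A ∘ f'_A = id`.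
-/

open MvPolynomial Function

theorem RingHom.injective_of_surjective_of_isNoetherianRing {S : Type*} [CommRing S]
    [IsNoetherianRing S] (φ : S →+* S) (hφ : Surjective φ) : Injective φ := by
  have hmono : Monotone fun n : ℕ => RingHom.ker (φ ^ n) :=
    monotone_nat_of_le_succ fun n x hx => by
      simp only [RingHom.mem_ker, RingHom.coe_pow, iterate_succ_apply'] at hx ⊢
      rw [hx, map_zero]
  obtain ⟨n, hn⟩ := monotone_stabilizes_iff_noetherian.2 inferInstance ⟨_, hmono⟩
  refine (injective_iff_map_eq_zero φ).2 fun x hx => ?_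
  obtain ⟨w, rfl⟩ : ∃ w, (φ ^ n) w = x := (RingHom.coe_pow φ n ▸ hφ.iterate n) x
  have hw : w ∈ RingHom.ker (φ ^ (n + 1)) := by
    rwa [RingHom.mem_ker, RingHom.coe_pow, iterate_succ_apply', ← RingHom.coe_pow]
  have hstable : RingHom.ker (φ ^ (n + 1)) = RingHom.ker (φ ^ n) := (hn _ n.le_succ).symm
  exact (hstable ▸ hw : w ∈ RingHom.ker (φ ^ n))

section

variable {R σ : Type*} [CommSemiring R]

theorem bind₁_eq_X_of_aeval_comp_eq_id {f f' : σ → MvPolynomial σ R}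
    (h : (fun (a : σ → MvPolynomial σ R) => fun i => aeval a (f' i)) ∘
      (fun a => fun i => aeval a (f i)) = id) (i : σ) :
    bind₁ f (f' i) = X i := by
  simpa using congrFun (congrFun h X) i

theorem aeval_comp_aeval_eq_id_of_bind₁_eq_X {A : Type*} [CommSemiring A] [Algebra R A]
    {f f' : σ → MvPolynomial σ R} (h : ∀ i, bind₁ f' (f i) = X i) :
    (fun (a : σ → A) => fun i => aeval a (f i)) ∘ (fun a => fun i => aeval a (f' i)) = id := by
  funext a i
  simp only [comp_apply, id_eq, ← aeval_bind₁, h, aeval_X]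

end

theorem bind₁_eq_X_symm {R σ : Type*} [CommRing R] [IsNoetherianRing R] [Finite σ]
    {f f' : σ → MvPolynomial σ R} (h : ∀ i, bind₁ f (f' i) = X i) (i : σ) :
    bind₁ f' (f i) = X i := by
  have hinv : (bind₁ f).comp (bind₁ f') = AlgHom.id R _ :=
    algHom_ext fun j => by simp [h]
  have hinj : Injective (bind₁ f) :=
    RingHom.injective_of_surjective_of_isNoetherianRing (bind₁ f : MvPolynomial σ R →+* _)
      fun p => ⟨bind₁ f' p, AlgHom.congr_fun hinv p⟩
  exact hinj ((AlgHom.congr_fun hinv (f i)).trans (bind₁_X_right f i).symm)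

theorem stmt_6_general (N : ℕ) (f f' : Fin N → MvPolynomial (Fin N) ℤ)
    (h : ∀ (A : Type) [CommRing A],
      (fun (a : Fin N → A) => fun i => MvPolynomial.aeval a (f' i)) ∘
        (fun (a : Fin N → A) => fun i => MvPolynomial.aeval a (f i)) = id) :
    ∀ (A : Type) [CommRing A],
      ((fun (a : Fin N → A) => fun i => MvPolynomial.aeval a (f i)) ∘
        (fun (a : Fin N → A) => fun i => MvPolynomial.aeval a (f' i)) = id) ∧
      Function.Bijective (fun (a : Fin N → A) => fun i => MvPolynomial.aeval a (f i)) := by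
  have hinv : ∀ i, bind₁ f' (f i) = X i :=
    bind₁_eq_X_symm (bind₁_eq_X_of_aeval_comp_eq_id (h _))
  intro A _
  have hright := aeval_comp_aeval_eq_id_of_bind₁_eq_X (A := A) hinv
  exact ⟨hright, bijective_iff_has_inverse.2 ⟨_, congrFun (h A), congrFun hright⟩⟩

/-- If two tuples of integer polynomials satisfy `f'_A ∘ f_A = id` for every
commutative ring `A`, then also `f_A ∘ f'_A = id` for every `A`; in particular each `f_A`
is bijective. -/
theorem stmt_6 (N : ℕ) (hN : 0 < N) (f f' : Fin N → MvPolynomial (Fin N) ℤ)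
    (h : ∀ (A : Type) [CommRing A],
      (fun (a : Fin N → A) => fun i => MvPolynomial.aeval a (f' i)) ∘
        (fun (a : Fin N → A) => fun i => MvPolynomial.aeval a (f i)) = id) :
    ∀ (A : Type) [CommRing A],
      ((fun (a : Fin N → A) => fun i => MvPolynomial.aeval a (f i)) ∘
        (fun (a : Fin N → A) => fun i => MvPolynomial.aeval a (f' i)) = id) ∧
      Function.Bijective (fun (a : Fin N → A) => fun i => MvPolynomial.aeval a (f i)) :=
  stmt_6_general N f f' h
end

section
/- Let G be a group with subgroups U, U⁻, T such that U ∩ U⁻ = {1} and multiplication U⁻ × T × U → G is injective. Let w̄ ∈ G be an element such that conjugation by w̄ maps a subgroup U^w ≤ U into U⁻ (i.e., w̄⁻¹ U^w w̄ ⊆ U⁻). Then multiplication (U^w · w̄) × U → G, ((u w̄), u') ↦ u w̄ u', is injective; i.e., if u₁ w̄ u'₁ = u₂ w̄ u'₂ with u₁,u₂ ∈ U^w and u'₁,u'₂ ∈ U, then u₁ = u₂ and u'₁ = u'₂. -/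
theorem conj_inv_mul_eq_mul_inv_of_mul_mul_eq {G : Type*} [Group G] {a b c d w : G}
    (h : a * w * b = c * w * d) : w⁻¹ * (c⁻¹ * a) * w = d * b⁻¹ :=
  calc w⁻¹ * (c⁻¹ * a) * w = w⁻¹ * c⁻¹ * (a * w * b) * b⁻¹ := by group
    _ = w⁻¹ * c⁻¹ * (c * w * d) * b⁻¹ := by rw [h]
    _ = d * b⁻¹ := by group

theorem stmt_11_general (G : Type) [Group G] (U Um : Subgroup G)
    (h1 : U ⊓ Um = ⊥)
    (w : G) (Uw : Subgroup G)
    (hconj : ∀ u ∈ Uw, w⁻¹ * u * w ∈ Um) :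
    ∀ u₁ ∈ Uw, ∀ u₂ ∈ Uw, ∀ u'₁ ∈ U, ∀ u'₂ ∈ U,
      u₁ * w * u'₁ = u₂ * w * u'₂ → u₁ = u₂ ∧ u'₁ = u'₂ := by
  intro u₁ hu₁ u₂ hu₂ u'₁ hu'₁ u'₂ hu'₂ heq
  have hmemU : u'₂ * u'₁⁻¹ ∈ U := U.mul_mem hu'₂ (U.inv_mem hu'₁)
  have hmemUm : u'₂ * u'₁⁻¹ ∈ Um :=
    conj_inv_mul_eq_mul_inv_of_mul_mul_eq heq ▸ hconj _ (Uw.mul_mem (Uw.inv_mem hu₂) hu₁)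
  have hright : u'₁ = u'₂ :=
    (mul_inv_eq_one.mp (Subgroup.disjoint_def.mp (disjoint_iff.mpr h1) hmemU hmemUm)).symm
  subst hright
  exact ⟨mul_right_cancel (mul_right_cancel heq), rfl⟩

/-- abstract injectivity of multiplication `(U^w w̄) × U → G`
(statement 2.7(d) of the paper). -/
theorem stmt_11 (G : Type) [Group G] (U Um T : Subgroup G)
    (h1 : U ⊓ Um = ⊥)
    (h2 : Function.Injective (fun x : Um × T × U => (x.1 : G) * x.2.1 * x.2.2))
    (w : G) (Uw : Subgroup G) (hUw : Uw ≤ U)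
    (hconj : ∀ u ∈ Uw, w⁻¹ * u * w ∈ Um) :
    ∀ u₁ ∈ Uw, ∀ u₂ ∈ Uw, ∀ u'₁ ∈ U, ∀ u'₂ ∈ U,
      u₁ * w * u'₁ = u₂ * w * u'₂ → u₁ = u₂ ∧ u'₁ = u'₂ :=
  stmt_11_general G U Um h1 w Uw hconj
end

section
/- Let G be a group, U ≤ G a subgroup, w̄ ∈ G, and suppose U = U^w · U_w (every u ∈ U factors as u = u'u'' with u' ∈ U^w := U ∩ w̄U⁻w̄⁻¹ and u'' ∈ U_w := U ∩ w̄Uw̄⁻¹, where U⁻ ≤ G satisfies U ∩ U⁻ = {1}). Then U w̄ U = U^w w̄ U, and the multiplication map (U^w w̄) × U → U w̄ U is a bijection. -/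
/-!
Write `U^w = {a ∈ U | w⁻¹ a w ∈ U⁻}`. Splitting `u = a b` with `a ∈ U^w` and `w⁻¹ b w ∈ U` lets
`b` slide across `w` into the right-hand factor: `u w u' = a w ((w⁻¹ b w) u')`, so `U w U = U^w w U`.
For uniqueness, `a w u = a' w u'` forces `u' u⁻¹ = (w⁻¹ a' w)⁻¹ (w⁻¹ a w)`, which lies in
`U ∩ U⁻ = 1`.
-/

section DoubleCoset

variable {G : Type*} [Group G]

theorem doubleCoset_eq_of_forall_eq_mul (U : Subgroup G) (w : G) {A : Set G}
    (hAU : A ⊆ U) (hfac : ∀ u ∈ U, ∃ a ∈ A, ∃ b, w⁻¹ * b * w ∈ U ∧ u = a * b) :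
    {x | ∃ u ∈ U, ∃ u' ∈ U, x = u * w * u'} = {x | ∃ a ∈ A, ∃ u' ∈ U, x = a * w * u'} := by
  ext x
  constructor
  · rintro ⟨u, hu, u', hu', rfl⟩
    obtain ⟨a, ha, b, hb, rfl⟩ := hfac u hu
    exact ⟨a, ha, w⁻¹ * b * w * u', mul_mem hb hu', by group⟩
  · rintro ⟨a, ha, u', hu', rfl⟩
    exact ⟨a, hAU ha, u', hu', rfl⟩

theorem injOn_mul_mul_of_inf_eq_bot {U V : Subgroup G} (hUV : U ⊓ V = ⊥) (w : G) :
    Set.InjOn (fun q : G × G => q.1 * w * q.2) ({a | w⁻¹ * a * w ∈ V} ×ˢ (U : Set G)) := by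
  rintro ⟨a, u⟩ ⟨ha, hu⟩ ⟨a', u'⟩ ⟨ha', hu'⟩ (h : a * w * u = a' * w * u')
  have hu'_eq : u' = (a' * w)⁻¹ * (a * w * u) := by rw [h]; group
  have hconj : u' * u⁻¹ = (w⁻¹ * a' * w)⁻¹ * (w⁻¹ * a * w) := by rw [hu'_eq]; group
  have hmem : u' * u⁻¹ ∈ U ⊓ V :=
    Subgroup.mem_inf.mpr ⟨mul_mem hu' (inv_mem hu), hconj ▸ mul_mem (inv_mem ha') ha⟩
  rw [hUV, Subgroup.mem_bot, mul_inv_eq_one] at hmem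
  subst hmem
  exact Prod.ext (mul_right_cancel (mul_right_cancel h)) rfl

end DoubleCoset

/-- if `U = U^w · U_w` then `U w̄ U = U^w w̄ U` and multiplication
`(U^w w̄) × U → U w̄ U` is a bijection (2.7(d) of the paper). -/
theorem stmt_12 (G : Type) [Group G] (U Um : Subgroup G)
    (h1 : U ⊓ Um = ⊥) (w : G) :
    let Uup : Set G := {u | u ∈ U ∧ w⁻¹ * u * w ∈ Um}
    let Udown : Set G := {u | u ∈ U ∧ w⁻¹ * u * w ∈ U}
    (∀ u ∈ U, ∃ u' ∈ Uup, ∃ u'' ∈ Udown, u = u' * u'') →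
      ({x | ∃ u ∈ U, ∃ u' ∈ U, x = u * w * u'} =
        {x | ∃ u ∈ Uup, ∃ u' ∈ U, x = u * w * u'}) ∧
      Set.BijOn (fun q : G × G => q.1 * w * q.2) (Uup ×ˢ (U : Set G))
        {x | ∃ u ∈ U, ∃ u' ∈ U, x = u * w * u'} := by
  intro Uup Udown hfac
  have hdouble := doubleCoset_eq_of_forall_eq_mul U w (A := Uup) (fun _ ha => ha.1)
    fun u hu =>
      let ⟨a, ha, b, hb, hu_eq⟩ := hfac u hu
      ⟨a, ha, b, hb.2, hu_eq⟩
  refine ⟨hdouble, ?_, ?_, ?_⟩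
  · rintro ⟨a, u⟩ ⟨ha, hu⟩
    exact ⟨a, ha.1, u, hu, rfl⟩
  · exact (injOn_mul_mul_of_inf_eq_bot h1 w).mono
      (Set.prod_mono (fun _ ha => ha.2) subset_rfl)
  · rw [hdouble]
    rintro _ ⟨a, ha, u, hu, rfl⟩
    exact ⟨(a, u), ⟨ha, hu⟩, rfl⟩
end

section
/- Let G be a group, U ≤ G, w̄ ∈ G, with U⁻ ≤ G satisfying U ∩ U⁻ = {1}, U^w := U ∩ w̄U⁻w̄⁻¹, U_w := U ∩ w̄Uw̄⁻¹, and assume multiplication U^w × U_w → U is bijective. Suppose further an automorphism π of G preserves U. If the 'twisted conjugation' map Ξ : U × (U^w w̄) → U w̄ U, (u, z) ↦ u z π(u)⁻¹, is surjective, then every element of U w̄ can be written as u' u'' w̄ π(u')⁻¹ with u' ∈ U, π(u') ∈ w̄⁻¹U_w w̄, u'' ∈ U^w. -/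
/-- abstract form of 3.14(c): surjectivity of the twisted conjugation map
`Ξ : U × (U^w w̄) → U w̄ U` implies surjectivity of
`α : {u' ∈ U : w̄π(u')w̄⁻¹ ∈ U} × U^w → U`, `(u',u'') ↦ u'u''w̄π(u')⁻¹w̄⁻¹`. -/
theorem stmt_13 (G : Type) [Group G] (U Um : Subgroup G)
    (h1 : U ⊓ Um = ⊥) (w : G) (π : G ≃* G) (hπ : ∀ u : G, u ∈ U ↔ π u ∈ U) :
    let Uup : Set G := {u | u ∈ U ∧ w⁻¹ * u * w ∈ Um}
    let Udown : Set G := {u | u ∈ U ∧ w⁻¹ * u * w ∈ U}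
    (∀ u ∈ U, ∃! q : G × G, q.1 ∈ Uup ∧ q.2 ∈ Udown ∧ u = q.1 * q.2) →
    (∀ g ∈ {x | ∃ u ∈ U, ∃ u' ∈ U, x = u * w * u'},
      ∃ u ∈ U, ∃ z ∈ Uup, g = u * (z * w) * (π u)⁻¹) →
    ∀ u ∈ U, ∃ u' ∈ U, w * π u' * w⁻¹ ∈ U ∧
      ∃ u'' ∈ Uup, u = u' * u'' * w * (π u')⁻¹ * w⁻¹ := by
  intro Uup Udown _ hXi u hu
  obtain ⟨u₀, hu₀, z, hz, heq⟩ := hXi (u * w) ⟨u, hu, 1, one_mem U, by group⟩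
  have hu' : u = u₀ * z * w * (π u₀)⁻¹ * w⁻¹ := by
    have h := eq_mul_inv_of_mul_eq heq; rw [h]; group
  refine ⟨u₀, hu₀, ?_, z, hz, hu'⟩
  · have h2 : w * (π u₀)⁻¹ * w⁻¹ = z⁻¹ * u₀⁻¹ * u := by
      rw [hu']; group
    have : w * (π u₀)⁻¹ * w⁻¹ ∈ U := by
      rw [h2]; exact mul_mem (mul_mem (inv_mem hz.1) (inv_mem hu₀)) hu
    have := inv_mem this
    simpa [mul_assoc] using this
end

section
/- Let G be a group with subgroups U, U⁻ such that U ∩ U⁻ = {1}, let w̄ ∈ G with U^w := U ∩ w̄U⁻w̄⁻¹, and let π be an automorphism of G preserving U. If the map Ξ : U × (U^w w̄) → G, (u,z) ↦ u z π(u)⁻¹, is injective, then the map α : {u' ∈ U : w̄ π(u') w̄⁻¹ ∈ U} × U^w → U, (u', u'') ↦ u' u'' w̄ π(u')⁻¹ w̄⁻¹, is injective. -/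
theorem stmt_14_general (G : Type) [Group G] (U Um : Subgroup G)
    (w : G) (π : G ≃* G) :
    let Uup : Set G := {u | u ∈ U ∧ w⁻¹ * u * w ∈ Um}
    (∀ u₁ ∈ U, ∀ u₂ ∈ U, ∀ z₁ ∈ Uup, ∀ z₂ ∈ Uup,
      u₁ * (z₁ * w) * (π u₁)⁻¹ = u₂ * (z₂ * w) * (π u₂)⁻¹ → u₁ = u₂ ∧ z₁ = z₂) →
    ∀ u'₁, u'₁ ∈ U → w * π u'₁ * w⁻¹ ∈ U →
    ∀ u'₂, u'₂ ∈ U → w * π u'₂ * w⁻¹ ∈ U →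
    ∀ u''₁ ∈ Uup, ∀ u''₂ ∈ Uup,
      u'₁ * u''₁ * w * (π u'₁)⁻¹ * w⁻¹ = u'₂ * u''₂ * w * (π u'₂)⁻¹ * w⁻¹ →
      u'₁ = u'₂ ∧ u''₁ = u''₂ := by
  intro Uup hΞ u'₁ hu'₁ _ u'₂ hu'₂ _ u''₁ hu''₁ u''₂ hu''₂ hα
  refine hΞ u'₁ hu'₁ u'₂ hu'₂ u''₁ hu''₁ u''₂ hu''₂ ?_
  -- `α(u', u'') * w̄ = Ξ(u', u'')`, so right multiplication by `w̄` reduces to injectivity of `Ξ`.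
  simpa only [mul_assoc, inv_mul_cancel, mul_one] using congrArg (· * w) hα

/-- abstract form of 3.14(b): injectivity of
`Ξ : U × (U^w w̄) → G`, `(u,z) ↦ u z π(u)⁻¹`, implies injectivity of
`α : {u' ∈ U : w̄π(u')w̄⁻¹ ∈ U} × U^w → U`, `(u',u'') ↦ u'u''w̄π(u')⁻¹w̄⁻¹`. -/
theorem stmt_14 (G : Type) [Group G] (U Um : Subgroup G)
    (h1 : U ⊓ Um = ⊥) (w : G) (π : G ≃* G) (hπ : ∀ u : G, u ∈ U ↔ π u ∈ U) :
    let Uup : Set G := {u | u ∈ U ∧ w⁻¹ * u * w ∈ Um}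
    (∀ u₁ ∈ U, ∀ u₂ ∈ U, ∀ z₁ ∈ Uup, ∀ z₂ ∈ Uup,
      u₁ * (z₁ * w) * (π u₁)⁻¹ = u₂ * (z₂ * w) * (π u₂)⁻¹ → u₁ = u₂ ∧ z₁ = z₂) →
    ∀ u'₁, u'₁ ∈ U → w * π u'₁ * w⁻¹ ∈ U →
    ∀ u'₂, u'₂ ∈ U → w * π u'₂ * w⁻¹ ∈ U →
    ∀ u''₁ ∈ Uup, ∀ u''₂ ∈ Uup,
      u'₁ * u''₁ * w * (π u'₁)⁻¹ * w⁻¹ = u'₂ * u''₂ * w * (π u'₂)⁻¹ * w⁻¹ →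
      u'₁ = u'₂ ∧ u''₁ = u''₂ :=
  stmt_14_general G U Um w π
end
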